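/- arXiv:0805.0639 — 2 statements merged into one kernel-verified Lean document; each statement's English description precedes it below -/
import Mathlib

section
/- Let U : ℝ^{3×3} × ℝ³ → ℝ be differentiable and invariant under simultaneous rotations, i.e., U(QA, Qx) = U(A, x) for all Q ∈ SO(3), all A ∈ ℝ^{3×3} and x ∈ ℝ³. For a point (A, x), let G(A,x) ∈ ℝ^{3×3} denote the matrix of partial derivatives of U with respect to the entries of A (so the derivative of U at (A,x) in the direction (H, 0) equals Σ_{ij} G(A,x)_{ij} H_{ij}), and let g(A,x) ∈ ℝ³ be the gradient of U with respect to x. Then for every R ∈ SO(3) and x ∈ ℝ³, the matrix G(R,x)ᵀR − RᵀG(R,x) is skew-symmetric, and the vector M(R,x) ∈ ℝ³ defined by S_{M(R,x)} = G(R,x)ᵀR − RᵀG(R,x) satisfies R·M(R,x) = x × g(R,x). -/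
/-!
Differentiating the invariance `U (exp (t • Ω) * A, exp (t • Ω) *ᵥ x) = U (A, x)` at `t = 0`,
for the skew matrix `Ω = S_w`, gives `tr (R Gᵀ S_w) + g ⬝ᵥ (w ⨯₃ x) = 0`. Conjugation by a
rotation turns `S_M` into `S_{RM}`, so `R Gᵀ - G Rᵀ = R S_M Rᵀ = S_{RM}`, and `tr (B S_w) = -(v ⬝ᵥ w)`
whenever `B - Bᵀ = S_v`. Hence `(R M) ⬝ᵥ w = (x ⨯₃ g) ⬝ᵥ w` for every `w`.
-/

open Matrix

attribute [local instance] Matrix.normedAddCommGroup Matrix.normedSpace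

/-- The hat map: `hat x` is the skew-symmetric matrix with `(hat x) *ᵥ y = x ×₃ y`. -/
def hat (x : Fin 3 → ℝ) : Matrix (Fin 3) (Fin 3) ℝ :=
  !![0, -x 2, x 1; x 2, 0, -x 0; -x 1, x 0, 0]

theorem Matrix.transpose_mulVec_cross_mulVec {R : Type*} [CommRing R]
    (A : Matrix (Fin 3) (Fin 3) R) (a b : Fin 3 → R) :
    Aᵀ *ᵥ ((A *ᵥ a) ⨯₃ (A *ᵥ b)) = A.det • (a ⨯₃ b) := by
  ext i
  fin_cases i <;> simp [cross_apply, mulVec, dotProduct, Fin.sum_univ_three, det_fin_three] <;> ring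

theorem Matrix.mulVec_cross_mulVec_of_special_orthogonal {R : Type*} [CommRing R]
    {A : Matrix (Fin 3) (Fin 3) R} (hA : Aᵀ * A = 1) (hdet : A.det = 1) (a b : Fin 3 → R) :
    (A *ᵥ a) ⨯₃ (A *ᵥ b) = A *ᵥ (a ⨯₃ b) := by
  calc (A *ᵥ a) ⨯₃ (A *ᵥ b) = A *ᵥ (Aᵀ *ᵥ ((A *ᵥ a) ⨯₃ (A *ᵥ b))) := by
        rw [mulVec_mulVec, mul_eq_one_comm.mp hA, one_mulVec]
    _ = A *ᵥ (a ⨯₃ b) := by rw [transpose_mulVec_cross_mulVec, hdet, one_smul]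

lemma hat_mulVec (v w : Fin 3 → ℝ) : hat v *ᵥ w = v ⨯₃ w := by
  ext i
  fin_cases i <;> simp [hat, cross_apply, mulVec, dotProduct, Fin.sum_univ_three] <;> ring

lemma hat_transpose (v : Fin 3 → ℝ) : (hat v)ᵀ = -hat v := by
  ext i j
  fin_cases i <;> fin_cases j <;> simp [hat]

lemma mul_hat_mul_transpose {R : Matrix (Fin 3) (Fin 3) ℝ} (hR : Rᵀ * R = 1) (hdet : R.det = 1)
    (v : Fin 3 → ℝ) : R * hat v * Rᵀ = hat (R *ᵥ v) := by
  refine ext_iff_mulVec.mpr fun y => ?_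
  rw [← mulVec_mulVec, ← mulVec_mulVec, hat_mulVec, hat_mulVec,
    ← mulVec_cross_mulVec_of_special_orthogonal hR hdet, mulVec_mulVec, mul_eq_one_comm.mp hR,
    one_mulVec]

lemma trace_hat_mul_hat (v w : Fin 3 → ℝ) : trace (hat v * hat w) = -2 * (v ⬝ᵥ w) := by
  simp [hat, trace, Fin.sum_univ_three, dotProduct]
  ring

lemma trace_mul_hat_of_sub_transpose_eq_hat {A : Matrix (Fin 3) (Fin 3) ℝ} {v : Fin 3 → ℝ}
    (hA : A - Aᵀ = hat v) (w : Fin 3 → ℝ) : trace (A * hat w) = -(v ⬝ᵥ w) := by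
  have htranspose : trace (Aᵀ * hat w) = -trace (A * hat w) := by
    rw [← trace_transpose, transpose_mul, hat_transpose, transpose_transpose, neg_mul, trace_neg,
      trace_mul_comm]
  have h := trace_hat_mul_hat v w
  rw [← hA, sub_mul, trace_sub, htranspose] at h
  linarith

section InfinitesimalInvariance

variable {n : Type*} [Fintype n] [DecidableEq n]

open NormedSpace

theorem Matrix.exp_transpose_mul_exp_of_transpose_eq_neg {Ω : Matrix n n ℝ} (hΩ : Ωᵀ = -Ω) :
    (exp Ω)ᵀ * exp Ω = 1 := by
  open scoped Matrix.Norms.Operator in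
  rw [← exp_transpose, hΩ, ← exp_add_of_commute _ _ (Commute.neg_left (Commute.refl Ω)),
    neg_add_cancel, exp_zero]

theorem Matrix.det_exp_of_transpose_eq_neg {Ω : Matrix n n ℝ} (hΩ : Ωᵀ = -Ω) :
    (exp Ω).det = 1 := by
  have hsq : (exp Ω).det ^ 2 = 1 := by
    rw [sq]
    nth_rw 1 [← det_transpose]
    rw [← det_mul, exp_transpose_mul_exp_of_transpose_eq_neg hΩ, det_one]
  -- `exp Ω` is the square of `exp (Ω / 2)`, so its determinant is nonnegative
  have hnonneg : 0 ≤ (exp Ω).det := by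
    have hhalf : exp Ω = exp ((2 : ℝ)⁻¹ • Ω) * exp ((2 : ℝ)⁻¹ • Ω) := by
      open scoped Matrix.Norms.Operator in
      rw [← exp_add_of_commute _ _ (Commute.refl _), ← add_smul]
      norm_num
    rw [hhalf, det_mul]
    exact mul_self_nonneg _
  nlinarith

-- Proved under the operator norm, which makes matrices a complete normed algebra; its topology is
-- definitionally the product topology, so the result holds for the default instances.
theorem Matrix.hasDerivAt_exp_smul_zero (Ω : Matrix n n ℝ) :
    HasDerivAt (fun t : ℝ => exp (t • Ω)) Ω 0 := by
  open scoped Matrix.Norms.Operator in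
  have h := hasDerivAt_exp_smul_const (𝕂 := ℝ) Ω 0
  rw [zero_smul, exp_zero, one_mul] at h
  exact h

theorem fderiv_infinitesimal_rotation_eq_zero {U : Matrix n n ℝ × (n → ℝ) → ℝ}
    {A : Matrix n n ℝ} {x : n → ℝ} (hU : DifferentiableAt ℝ U (A, x))
    (hinv : ∀ Q : Matrix n n ℝ, Qᵀ * Q = 1 → Q.det = 1 → U (Q * A, Q *ᵥ x) = U (A, x))
    {Ω : Matrix n n ℝ} (hΩ : Ωᵀ = -Ω) :
    fderiv ℝ U (A, x) (Ω * A, Ω *ᵥ x) = 0 := by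
  let act : Matrix n n ℝ →L[ℝ] Matrix n n ℝ × (n → ℝ) :=
    LinearMap.toContinuousLinearMap
      ((LinearMap.mulRight ℝ A).prod ((mulVecBilin ℝ ℝ).flip x))
  have hcurve : HasDerivAt (fun t : ℝ => U (act (exp (t • Ω)))) (fderiv ℝ U (A, x) (act Ω)) 0 :=
    HasFDerivAt.comp_hasDerivAt_of_eq 0 hU.hasFDerivAt
      (act.hasFDerivAt.comp_hasDerivAt (0 : ℝ) (hasDerivAt_exp_smul_zero Ω))
      (by simp [act])
  have hconst : (fun t : ℝ => U (act (exp (t • Ω)))) = fun _ => U (A, x) := by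
    funext t
    have htΩ : (t • Ω)ᵀ = -(t • Ω) := by rw [transpose_smul, hΩ, smul_neg]
    exact hinv _ (exp_transpose_mul_exp_of_transpose_eq_neg htΩ)
      (det_exp_of_transpose_eq_neg htΩ)
  rw [hconst] at hcurve
  exact hcurve.unique (hasDerivAt_const _ _)

end InfinitesimalInvariance

/-- For a differentiable potential `U(A,x)` invariant under simultaneous
rotations, with `G(A,x)` the matrix of partial derivatives of `U` in `A` and `g(A,x)` the
gradient of `U` in `x`, for every `R ∈ SO(3)` and `x`, the matrix `G(R,x)ᵀR − RᵀG(R,x)` is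
skew-symmetric and the vector `M(R,x)` with `S_{M(R,x)} = G(R,x)ᵀR − RᵀG(R,x)` satisfies
`R·M(R,x) = x × g(R,x)`. -/
theorem invariant_potential_torque_identity
    (U : Matrix (Fin 3) (Fin 3) ℝ × (Fin 3 → ℝ) → ℝ)
    (hU : Differentiable ℝ U)
    (hinv : ∀ Q : Matrix (Fin 3) (Fin 3) ℝ, Qᵀ * Q = 1 → Q.det = 1 →
      ∀ (A : Matrix (Fin 3) (Fin 3) ℝ) (x : Fin 3 → ℝ), U (Q * A, Q *ᵥ x) = U (A, x))
    (G : Matrix (Fin 3) (Fin 3) ℝ → (Fin 3 → ℝ) → Matrix (Fin 3) (Fin 3) ℝ)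
    (hG : ∀ (A : Matrix (Fin 3) (Fin 3) ℝ) (x : Fin 3 → ℝ) (H : Matrix (Fin 3) (Fin 3) ℝ),
      fderiv ℝ U (A, x) (H, 0) = ∑ i : Fin 3, ∑ j : Fin 3, G A x i j * H i j)
    (g : Matrix (Fin 3) (Fin 3) ℝ → (Fin 3 → ℝ) → (Fin 3 → ℝ))
    (hg : ∀ (A : Matrix (Fin 3) (Fin 3) ℝ) (x : Fin 3 → ℝ) (w : Fin 3 → ℝ),
      fderiv ℝ U (A, x) (0, w) = g A x ⬝ᵥ w) :
    ∀ (R : Matrix (Fin 3) (Fin 3) ℝ) (x : Fin 3 → ℝ), Rᵀ * R = 1 → R.det = 1 →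
      ((G R x)ᵀ * R - Rᵀ * G R x)ᵀ = -((G R x)ᵀ * R - Rᵀ * G R x) ∧
      ∀ M : Fin 3 → ℝ, hat M = (G R x)ᵀ * R - Rᵀ * G R x →
        R *ᵥ M = x ⨯₃ g R x := by
  intro R x hR hdet
  refine ⟨by rw [transpose_sub, transpose_mul, transpose_mul, transpose_transpose,
    transpose_transpose, neg_sub], fun M hM => ?_⟩
  have hspatial : R * (G R x)ᵀ - (R * (G R x)ᵀ)ᵀ = hat (R *ᵥ M) := by
    rw [← mul_hat_mul_transpose hR hdet, hM, transpose_mul, transpose_transpose, mul_sub, sub_mul,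
      ← mul_assoc, ← mul_assoc, mul_assoc _ R, mul_eq_one_comm.mp hR, mul_one, one_mul]
  have hdot : ∀ w, (R *ᵥ M) ⬝ᵥ w = (x ⨯₃ g R x) ⬝ᵥ w := by
    intro w
    have h := fderiv_infinitesimal_rotation_eq_zero (hU (R, x))
      (fun Q hQ hQdet => hinv Q hQ hQdet R x) (hat_transpose w)
    have htrace : ∑ i, ∑ j, G R x i j * (hat w * R) i j = trace (R * (G R x)ᵀ * hat w) := by
      rw [← trace_mul_comm, ← mul_assoc, ← sum_hadamard_eq, hadamard_comm]
      rfl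
    rw [← add_zero (hat w * R), ← zero_add (hat w *ᵥ x), ← Prod.mk_add_mk, map_add, hG, hg,
      htrace, trace_mul_hat_of_sub_transpose_eq_hat hspatial, hat_mulVec,
      triple_product_permutation] at h
    rw [dotProduct_comm w] at h
    linarith
  funext i
  simpa using hdot (Pi.single i 1)
end

section
/- Consider the discrete dynamics of two rigid bodies connected by a ball joint with an internal control moment: let m₁, m₂ > 0, α = m₁/(m₁+m₂), β = m₂/(m₁+m₂), h ≠ 0, and d₁, d₂ ∈ ℝ³. Let sequences R_{1,k}, R_{2,k} ∈ SO(3), F_{1,k}, F_{2,k} ∈ SO(3), p_{1,k}, p_{2,k} ∈ ℝ³, and controls u_k ∈ ℝ³ satisfy, for all k: R_{i,k+1} = R_{i,k}F_{i,k} for i = 1,2; p_{1,k+1} = F_{1,k}ᵀ(p_{1,k} − b_{1,k}) + h·R_{1,k+1}ᵀ u_{k+1}; and p_{2,k+1} = F_{2,k}ᵀ(p_{2,k} − b_{2,k}) − h·R_{2,k+1}ᵀ u_{k+1}; where c_k = −α·R_{1,k}(F_{1,k}−I)d₁ − β·R_{2,k}(F_{2,k}−I)d₂, B_{i,k} = (m_i/h)·(F_{i,k}−I)d_i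 · c_kᵀ · R_{i,k}, and b_{i,k} ∈ ℝ³ is the vector with S_{b_{i,k}} = B_{i,k} − B_{i,k}ᵀ. Then the total spatial angular momentum R_{1,k}p_{1,k} + R_{2,k}p_{2,k} is the same for all k; in particular, if it vanishes initially, it vanishes along the entire controlled trajectory. -/
open Matrix

/-!
Pulled back to the spatial frame, each body's momentum update reads
`R_{i,k+1} p_{i,k+1} = R_{i,k} p_{i,k} - R_{i,k} b_{i,k} ± h u_{k+1}`, so the control moments
cancel in the sum and it remains to see `R₁ b₁ + R₂ b₂ = 0`. Since rotations commute with the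
cross product, `R_i b_i = (m_i / h) c × v_i` with `v_i = R_i (F_i - I) d_i`, and the choice of
`α, β` makes `m₁ v₁ + m₂ v₂ = -(m₁ + m₂) c` parallel to `c`.
-/

section CommRing

variable {K : Type*} [CommRing K]

theorem mulVec_cross_mulVec (A : Matrix (Fin 3) (Fin 3) K) (x y : Fin 3 → K) :
    (A *ᵥ x) ⨯₃ (A *ᵥ y) = A.adjugateᵀ *ᵥ (x ⨯₃ y) := by
  rw [adjugate_fin_three]
  funext i
  fin_cases i <;>
    simp [cross_apply, mulVec, dotProduct, Fin.sum_univ_three, transpose] <;> ring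

theorem adjugate_eq_transpose_of_transpose_mul_self {n : Type*} [Fintype n] [DecidableEq n]
    {Q : Matrix n n K} (hQ : Qᵀ * Q = 1) (hdet : Q.det = 1) : Q.adjugate = Qᵀ :=
  calc Q.adjugate = (Qᵀ * Q) * Q.adjugate := by rw [hQ, one_mul]
    _ = Qᵀ := by rw [mul_assoc, mul_adjugate, hdet, one_smul, mul_one]

theorem mulVec_cross_of_transpose_mul_self {Q : Matrix (Fin 3) (Fin 3) K} (hQ : Qᵀ * Q = 1)
    (hdet : Q.det = 1) (x y : Fin 3 → K) : Q *ᵥ (x ⨯₃ y) = (Q *ᵥ x) ⨯₃ (Q *ᵥ y) := by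
  rw [mulVec_cross_mulVec, adjugate_eq_transpose_of_transpose_mul_self hQ hdet,
    transpose_transpose]

theorem smul_cross_add_smul_cross_eq_zero {m₁ m₂ : K} {c v₁ v₂ : Fin 3 → K}
    (hc : (m₁ + m₂) • c = -(m₁ • v₁ + m₂ • v₂)) :
    m₁ • (c ⨯₃ v₁) + m₂ • (c ⨯₃ v₂) = 0 :=
  calc m₁ • (c ⨯₃ v₁) + m₂ • (c ⨯₃ v₂) = c ⨯₃ (m₁ • v₁ + m₂ • v₂) := by
        rw [map_add, map_smul, map_smul]
    _ = -((m₁ + m₂) • (c ⨯₃ c)) := by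
        rw [← neg_neg (m₁ • v₁ + m₂ • v₂), ← hc, map_neg, map_smul]
    _ = 0 := by rw [cross_self, smul_zero, neg_zero]

theorem mulVec_transpose_mulVec {n : Type*} [Fintype n] [DecidableEq n]
    {Q : Matrix n n K} (hQ : Qᵀ * Q = 1) (v : n → K) : Q *ᵥ (Qᵀ *ᵥ v) = v := by
  rw [mulVec_mulVec, mul_eq_one_comm.mp hQ, one_mulVec]

theorem mul_mulVec_transpose_mulVec {n : Type*} [Fintype n] [DecidableEq n]
    (R : Matrix n n K) {F : Matrix n n K} (hF : Fᵀ * F = 1) (v : n → K) :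
    (R * F) *ᵥ (Fᵀ *ᵥ v) = R *ᵥ v := by
  rw [← mulVec_mulVec, mulVec_transpose_mulVec hF]

end CommRing

theorem hat_injective : Function.Injective hat := by
  intro x y hxy
  funext i
  fin_cases i
  · simpa [hat] using congrFun (congrFun hxy 2) 1
  · simpa [hat] using congrFun (congrFun hxy 0) 2
  · simpa [hat] using congrFun (congrFun hxy 1) 0

theorem hat_smul (r : ℝ) (x : Fin 3 → ℝ) : hat (r • x) = r • hat x := by
  ext i j; fin_cases i <;> fin_cases j <;> simp [hat]

theorem vecMulVec_sub_transpose (a w : Fin 3 → ℝ) :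
    vecMulVec a w - (vecMulVec a w)ᵀ = hat (w ⨯₃ a) := by
  ext i j; fin_cases i <;> fin_cases j <;>
    simp [hat, vecMulVec, cross_apply, transpose] <;> ring

theorem mulVec_eq_smul_cross_of_hat_eq {Q : Matrix (Fin 3) (Fin 3) ℝ} (hQ : Qᵀ * Q = 1)
    (hdet : Q.det = 1) {r : ℝ} {a b c : Fin 3 → ℝ}
    (hb : hat b = r • vecMulVec a (Qᵀ *ᵥ c) - (r • vecMulVec a (Qᵀ *ᵥ c))ᵀ) :
    Q *ᵥ b = r • (c ⨯₃ (Q *ᵥ a)) := by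
  rw [transpose_smul, ← smul_sub, vecMulVec_sub_transpose, ← hat_smul] at hb
  rw [hat_injective hb, mulVec_smul, mulVec_cross_of_transpose_mul_self hQ hdet,
    mulVec_transpose_mulVec hQ]

theorem connected_bodies_momentum_conserved_general
    (m₁ m₂ : ℝ) (hm₁ : 0 < m₁) (hm₂ : 0 < m₂)
    (α β : ℝ) (hα : α = m₁ / (m₁ + m₂)) (hβ : β = m₂ / (m₁ + m₂))
    (h : ℝ) (d₁ d₂ : Fin 3 → ℝ)
    (R₁ R₂ F₁ F₂ : ℕ → Matrix (Fin 3) (Fin 3) ℝ)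
    (p₁ p₂ u : ℕ → Fin 3 → ℝ)
    (hR₁ : ∀ k, (R₁ k)ᵀ * R₁ k = 1) (hR₁det : ∀ k, (R₁ k).det = 1)
    (hR₂ : ∀ k, (R₂ k)ᵀ * R₂ k = 1) (hR₂det : ∀ k, (R₂ k).det = 1)
    (hF₁ : ∀ k, (F₁ k)ᵀ * F₁ k = 1)
    (hF₂ : ∀ k, (F₂ k)ᵀ * F₂ k = 1)
    (c : ℕ → Fin 3 → ℝ)
    (hc : ∀ k, c k = -(α • (R₁ k *ᵥ ((F₁ k - 1) *ᵥ d₁)))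
      - β • (R₂ k *ᵥ ((F₂ k - 1) *ᵥ d₂)))
    (B₁ B₂ : ℕ → Matrix (Fin 3) (Fin 3) ℝ)
    (hB₁ : ∀ k, B₁ k = (m₁ / h) • vecMulVec ((F₁ k - 1) *ᵥ d₁) ((R₁ k)ᵀ *ᵥ c k))
    (hB₂ : ∀ k, B₂ k = (m₂ / h) • vecMulVec ((F₂ k - 1) *ᵥ d₂) ((R₂ k)ᵀ *ᵥ c k))
    (b₁ b₂ : ℕ → Fin 3 → ℝ)
    (hb₁ : ∀ k, hat (b₁ k) = B₁ k - (B₁ k)ᵀ)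
    (hb₂ : ∀ k, hat (b₂ k) = B₂ k - (B₂ k)ᵀ)
    (hR₁up : ∀ k, R₁ (k + 1) = R₁ k * F₁ k)
    (hR₂up : ∀ k, R₂ (k + 1) = R₂ k * F₂ k)
    (hp₁up : ∀ k, p₁ (k + 1) = (F₁ k)ᵀ *ᵥ (p₁ k - b₁ k) + h • ((R₁ (k + 1))ᵀ *ᵥ u (k + 1)))
    (hp₂up : ∀ k, p₂ (k + 1) = (F₂ k)ᵀ *ᵥ (p₂ k - b₂ k) - h • ((R₂ (k + 1))ᵀ *ᵥ u (k + 1))) :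
    (∀ k, R₁ k *ᵥ p₁ k + R₂ k *ᵥ p₂ k = R₁ 0 *ᵥ p₁ 0 + R₂ 0 *ᵥ p₂ 0) ∧
    (R₁ 0 *ᵥ p₁ 0 + R₂ 0 *ᵥ p₂ 0 = 0 → ∀ k, R₁ k *ᵥ p₁ k + R₂ k *ᵥ p₂ k = 0) := by
  have hm : m₁ + m₂ ≠ 0 := by positivity
  have torque : ∀ k, R₁ k *ᵥ b₁ k + R₂ k *ᵥ b₂ k = 0 := by
    intro k
    have hb₁k := hb₁ k
    have hb₂k := hb₂ k
    rw [hB₁ k] at hb₁k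
    rw [hB₂ k] at hb₂k
    have hcom : (m₁ + m₂) • c k = -(m₁ • (R₁ k *ᵥ ((F₁ k - 1) *ᵥ d₁))
        + m₂ • (R₂ k *ᵥ ((F₂ k - 1) *ᵥ d₂))) := by
      rw [hc k, hα, hβ, smul_sub, smul_neg, smul_smul, smul_smul, mul_div_cancel₀ _ hm,
        mul_div_cancel₀ _ hm, neg_add']
    rw [mulVec_eq_smul_cross_of_hat_eq (hR₁ k) (hR₁det k) hb₁k,
      mulVec_eq_smul_cross_of_hat_eq (hR₂ k) (hR₂det k) hb₂k, div_eq_inv_mul, div_eq_inv_mul,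
      mul_smul, mul_smul, ← smul_add, smul_cross_add_smul_cross_eq_zero hcom, smul_zero]
  have step : ∀ k, R₁ (k + 1) *ᵥ p₁ (k + 1) + R₂ (k + 1) *ᵥ p₂ (k + 1)
      = R₁ k *ᵥ p₁ k + R₂ k *ᵥ p₂ k - (R₁ k *ᵥ b₁ k + R₂ k *ᵥ b₂ k) := by
    intro k
    rw [hp₁up, hp₂up, mulVec_add (R₁ _), mulVec_sub (R₂ _), mulVec_smul, mulVec_smul,
      mulVec_transpose_mulVec (hR₁ _), mulVec_transpose_mulVec (hR₂ _), hR₁up, hR₂up,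
      mul_mulVec_transpose_mulVec _ (hF₁ k), mul_mulVec_transpose_mulVec _ (hF₂ k),
      mulVec_sub, mulVec_sub]
    abel
  have conserved : ∀ k, R₁ k *ᵥ p₁ k + R₂ k *ᵥ p₂ k = R₁ 0 *ᵥ p₁ 0 + R₂ 0 *ᵥ p₂ 0 := by
    intro k
    induction k with
    | zero => rfl
    | succ k ih => rw [step, torque, sub_zero, ih]
  exact ⟨conserved, fun h0 k => (conserved k).trans h0⟩

/-- The reduced Lie group variational integrator for two rigid bodies
connected by a ball joint, with internal control moment `u`, conserves the total spatial
angular momentum `R_{1,k}p_{1,k} + R_{2,k}p_{2,k}`; in particular if it vanishes initially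
it vanishes along the entire controlled trajectory. -/
theorem connected_bodies_momentum_conserved
    (m₁ m₂ : ℝ) (hm₁ : 0 < m₁) (hm₂ : 0 < m₂)
    (α β : ℝ) (hα : α = m₁ / (m₁ + m₂)) (hβ : β = m₂ / (m₁ + m₂))
    (h : ℝ) (hh : h ≠ 0) (d₁ d₂ : Fin 3 → ℝ)
    (R₁ R₂ F₁ F₂ : ℕ → Matrix (Fin 3) (Fin 3) ℝ)
    (p₁ p₂ u : ℕ → Fin 3 → ℝ)
    (hR₁ : ∀ k, (R₁ k)ᵀ * R₁ k = 1) (hR₁det : ∀ k, (R₁ k).det = 1)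
    (hR₂ : ∀ k, (R₂ k)ᵀ * R₂ k = 1) (hR₂det : ∀ k, (R₂ k).det = 1)
    (hF₁ : ∀ k, (F₁ k)ᵀ * F₁ k = 1) (hF₁det : ∀ k, (F₁ k).det = 1)
    (hF₂ : ∀ k, (F₂ k)ᵀ * F₂ k = 1) (hF₂det : ∀ k, (F₂ k).det = 1)
    (c : ℕ → Fin 3 → ℝ)
    (hc : ∀ k, c k = -(α • (R₁ k *ᵥ ((F₁ k - 1) *ᵥ d₁)))
      - β • (R₂ k *ᵥ ((F₂ k - 1) *ᵥ d₂)))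
    (B₁ B₂ : ℕ → Matrix (Fin 3) (Fin 3) ℝ)
    (hB₁ : ∀ k, B₁ k = (m₁ / h) • vecMulVec ((F₁ k - 1) *ᵥ d₁) ((R₁ k)ᵀ *ᵥ c k))
    (hB₂ : ∀ k, B₂ k = (m₂ / h) • vecMulVec ((F₂ k - 1) *ᵥ d₂) ((R₂ k)ᵀ *ᵥ c k))
    (b₁ b₂ : ℕ → Fin 3 → ℝ)
    (hb₁ : ∀ k, hat (b₁ k) = B₁ k - (B₁ k)ᵀ)
    (hb₂ : ∀ k, hat (b₂ k) = B₂ k - (B₂ k)ᵀ)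
    (hR₁up : ∀ k, R₁ (k + 1) = R₁ k * F₁ k)
    (hR₂up : ∀ k, R₂ (k + 1) = R₂ k * F₂ k)
    (hp₁up : ∀ k, p₁ (k + 1) = (F₁ k)ᵀ *ᵥ (p₁ k - b₁ k) + h • ((R₁ (k + 1))ᵀ *ᵥ u (k + 1)))
    (hp₂up : ∀ k, p₂ (k + 1) = (F₂ k)ᵀ *ᵥ (p₂ k - b₂ k) - h • ((R₂ (k + 1))ᵀ *ᵥ u (k + 1))) :
    (∀ k, R₁ k *ᵥ p₁ k + R₂ k *ᵥ p₂ k = R₁ 0 *ᵥ p₁ 0 + R₂ 0 *ᵥ p₂ 0) ∧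
    (R₁ 0 *ᵥ p₁ 0 + R₂ 0 *ᵥ p₂ 0 = 0 → ∀ k, R₁ k *ᵥ p₁ k + R₂ k *ᵥ p₂ k = 0) :=
  connected_bodies_momentum_conserved_general m₁ m₂ hm₁ hm₂ α β hα hβ h d₁ d₂ R₁ R₂ F₁ F₂ p₁ p₂ u
    hR₁ hR₁det hR₂ hR₂det hF₁ hF₂ c hc B₁ B₂ hB₁ hB₂ b₁ b₂ hb₁ hb₂ hR₁up hR₂up hp₁up hp₂up
end
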